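/- Let X be uniform on S², R independent with cos R uniform on [-1,1], and B = {z ∈ S² : d_{S²}(z,X) ≤ R}. Then for all x, y ∈ S²: P(x ∈ B, y ∈ B) = 1/2 - (1/4)·sin(d_{S²}(x,y)/2). -/

import Mathlib

/-!
Conditionally on `X = z`, both points lie in the cap iff `cos R ≤ m z := min ⟪x, z⟫ ⟪y, z⟫`,
which has probability `(m z + 1) / 2` because `cos R` is uniform on `[-1, 1]`. Averaging over
the sphere and writing `min a b = (a + b - |a - b|) / 2`, the linear terms integrate to zero and
`∫_{S²} |⟪v, z⟫| dσ = 2π‖v‖` (Archimedes), so the probability is `1/2 - ‖x - y‖ / 8`; finally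
`‖x - y‖ = 2 sin (d(x, y) / 2)`.

The spherical integral of a positively homogeneous `g ⟪v, ·⟫` is found by evaluating
`∫ g ⟪v, x⟫ e^{-‖x‖²} dx` twice: in polar coordinates it is the spherical integral times a Gamma
factor, while after rotating `v` onto a coordinate axis it splits into one-dimensional Gaussian
integrals.
-/

open MeasureTheory ProbabilityTheory Real Set Metric Module
open scoped ENNReal

lemma integral_volumeIoiPow (n : ℕ) (f : ℝ → ℝ) :
    ∫ r, f r ∂(Measure.volumeIoiPow n) = ∫ r in Ioi (0 : ℝ), r ^ n * f r := by
  simp only [Measure.volumeIoiPow, ENNReal.ofReal]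
  rw [integral_withDensity_eq_integral_smul (measurable_subtype_coe.pow_const _).real_toNNReal,
    integral_subtype_comap measurableSet_Ioi fun a ↦ Real.toNNReal (a ^ n) • f a,
    setIntegral_congr_fun measurableSet_Ioi fun r hr ↦ ?_]
  rw [NNReal.smul_def, Real.coe_toNNReal _ (pow_nonneg hr.out.le _), smul_eq_mul]

lemma integral_Ioi_pow_mul_exp_neg_sq (n : ℕ) :
    ∫ r in Ioi (0 : ℝ), r ^ n * exp (-r ^ 2) = Gamma ((n + 1) / 2) / 2 := by
  have h := integral_rpow_mul_exp_neg_rpow (p := 2) (q := n) two_pos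
    (neg_one_lt_zero.trans_le n.cast_nonneg)
  simp only [rpow_natCast, rpow_ofNat] at h
  rw [h]
  ring

section Polar

variable {E : Type*} [NormedAddCommGroup E] [NormedSpace ℝ E] [FiniteDimensional ℝ E]
  [MeasurableSpace E] [BorelSpace E] [Nontrivial E] (μ : Measure E) [μ.IsAddHaarMeasure]

theorem integral_mul_exp_neg_sq_norm_of_homogeneous (f : E → ℝ)
    (hf : ∀ c : ℝ, 0 ≤ c → ∀ x, f (c • x) = c * f x) :
    ∫ x, f x * exp (-‖x‖ ^ 2) ∂μ =
      (∫ z, f z ∂μ.toSphere) * (Gamma ((finrank ℝ E + 1) / 2) / 2) := by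
  have hpolar : ∀ x : ({0}ᶜ : Set E), f x * exp (-‖(x : E)‖ ^ 2) =
      f (homeomorphUnitSphereProd E x).1 *
        ((homeomorphUnitSphereProd E x).2 * exp (-((homeomorphUnitSphereProd E x).2 : ℝ) ^ 2)) := by
    rintro ⟨x, hx : x ≠ 0⟩
    simp only [homeomorphUnitSphereProd_apply_fst_coe, homeomorphUnitSphereProd_apply_snd_coe]
    rw [hf _ (inv_nonneg.2 (norm_nonneg x))]
    field_simp [norm_ne_zero_iff.2 hx]
  have hd : finrank ℝ E - 1 + 1 = finrank ℝ E := Nat.sub_add_cancel finrank_pos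
  calc ∫ x, f x * exp (-‖x‖ ^ 2) ∂μ
      = ∫ x : ({0}ᶜ : Set E), f x * exp (-‖(x : E)‖ ^ 2) ∂(μ.comap (↑)) := by
        rw [integral_subtype_comap (measurableSet_singleton _).compl
          fun x : E ↦ f x * exp (-‖x‖ ^ 2), restrict_compl_singleton]
    _ = ∫ p : sphere (0 : E) 1 × Ioi (0 : ℝ), f p.1 * (p.2 * exp (-(p.2 : ℝ) ^ 2))
          ∂μ.toSphere.prod (.volumeIoiPow (finrank ℝ E - 1)) := by
        simp_rw [hpolar]
        exact μ.measurePreserving_homeomorphUnitSphereProd.integral_comp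
          (Homeomorph.measurableEmbedding _) fun p ↦ f p.1 * (p.2 * exp (-(p.2 : ℝ) ^ 2))
    _ = _ := by
        rw [integral_prod_mul (fun z : sphere (0 : E) 1 ↦ f z) fun r : Ioi (0 : ℝ) ↦
          (r : ℝ) * exp (-(r : ℝ) ^ 2), integral_volumeIoiPow _ fun r ↦ r * exp (-r ^ 2)]
        simp_rw [← mul_assoc, ← pow_succ, hd]
        rw [integral_Ioi_pow_mul_exp_neg_sq]

end Polar

section Euclidean

variable {ι : Type*} [Fintype ι]

lemma EuclideanSpace.exp_neg_sq_norm (x : EuclideanSpace ℝ ι) :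
    exp (-‖x‖ ^ 2) = ∏ i, exp (-x i ^ 2) := by
  simp [EuclideanSpace.norm_sq_eq, ← exp_sum]

lemma integral_eval_mul_exp_neg_sq_norm [DecidableEq ι] (g : ℝ → ℝ) (i : ι) :
    ∫ x : EuclideanSpace ℝ ι, g (x i) * exp (-‖x‖ ^ 2) =
      (∫ t, g t * exp (-t ^ 2)) * √π ^ (Fintype.card ι - 1) := by
  set F : ι → ℝ → ℝ := fun j t ↦ (if j = i then g t else 1) * exp (-t ^ 2)
  have hF : ∀ x : EuclideanSpace ℝ ι, g (x i) * exp (-‖x‖ ^ 2) = ∏ j, F j (x j) := by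
    intro x
    simp only [F, Finset.prod_mul_distrib, Fintype.prod_ite_eq', EuclideanSpace.exp_neg_sq_norm]
  have hFint : ∀ j, ∫ t, F j t = if j = i then ∫ t, g t * exp (-t ^ 2) else √π := by
    intro j
    split_ifs with hj
    · simp [F, hj]
    · simpa [F, hj] using integral_gaussian 1
  simp_rw [hF]
  rw [← (EuclideanSpace.volume_preserving_symm_measurableEquiv_toLp ι).symm.integral_comp']
  simp only [MeasurableEquiv.symm_symm]
  rw [volume_pi]
  refine (integral_fintype_prod_eq_prod F).trans ?_
  simp only [hFint, Fintype.prod_eq_mul_prod_compl i, ↓reduceIte]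
  rw [Finset.prod_congr rfl fun j hj ↦ if_neg (Finset.mem_compl.1 hj ∘ Finset.mem_singleton.2),
    Finset.prod_const, Finset.card_compl, Finset.card_singleton]

lemma integral_inner_unit_mul_exp_neg_sq_norm [DecidableEq ι] (g : ℝ → ℝ)
    {u : EuclideanSpace ℝ ι} (hu : ‖u‖ = 1) (i : ι) :
    ∫ x, g (inner ℝ u x) * exp (-‖x‖ ^ 2) = ∫ x : EuclideanSpace ℝ ι, g (x i) * exp (-‖x‖ ^ 2) := by
  set e : EuclideanSpace ℝ ι := EuclideanSpace.single i 1
  set T := (ℝ ∙ (e - u))ᗮ.reflection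
  have hTe : T e = u := Submodule.reflection_sub (by simp [e, hu])
  have hT : ∀ x, g (inner ℝ u (T x)) * exp (-‖T x‖ ^ 2) = g (x i) * exp (-‖x‖ ^ 2) := by
    intro x
    rw [← hTe, T.inner_map_map, T.norm_map, EuclideanSpace.inner_single_left]
    simp
  simp_rw [← hT]
  exact (T.measurePreserving.integral_comp T.toHomeomorph.measurableEmbedding
    fun x ↦ g (inner ℝ u x) * exp (-‖x‖ ^ 2)).symm

lemma integral_inner_mul_exp_neg_sq_norm_of_homogeneous (g : ℝ → ℝ)
    (hg : ∀ c : ℝ, 0 ≤ c → ∀ t, g (c * t) = c * g t) (v : EuclideanSpace ℝ ι) :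
    ∫ x, g (inner ℝ v x) * exp (-‖x‖ ^ 2) =
      ‖v‖ * (∫ t, g t * exp (-t ^ 2)) * √π ^ (Fintype.card ι - 1) := by
  classical
  rcases eq_or_ne v 0 with rfl | hv
  · have hg0 : g 0 = 0 := by simpa using hg 0 le_rfl 0
    simp [hg0]
  obtain ⟨i, -⟩ : ∃ i, v i ≠ 0 := by
    by_contra! h
    exact hv (PiLp.ext h)
  have hv' : ‖v‖ ≠ 0 := norm_ne_zero_iff.2 hv
  have hu : ‖‖v‖⁻¹ • v‖ = 1 := by simp [norm_smul, hv']
  have hinner : ∀ x, g (inner ℝ v x) = ‖v‖ * g (inner ℝ (‖v‖⁻¹ • v) x) := by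
    intro x
    rw [← hg _ (norm_nonneg v), real_inner_smul_left, mul_inv_cancel_left₀ hv']
  simp_rw [hinner, mul_assoc, integral_const_mul,
    integral_inner_unit_mul_exp_neg_sq_norm _ hu i, integral_eval_mul_exp_neg_sq_norm]

theorem integral_toSphere_inner_of_homogeneous [Nonempty ι] (g : ℝ → ℝ)
    (hg : ∀ c : ℝ, 0 ≤ c → ∀ t, g (c * t) = c * g t) (v : EuclideanSpace ℝ ι) :
    ∫ z : sphere (0 : EuclideanSpace ℝ ι) 1, g (inner ℝ v z) ∂volume.toSphere =
      2 * ‖v‖ * (∫ t, g t * exp (-t ^ 2)) * √π ^ (Fintype.card ι - 1) /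
        Gamma ((Fintype.card ι + 1) / 2) := by
  have hΓ : 0 < Gamma ((Fintype.card ι + 1) / 2) := Gamma_pos_of_pos (by positivity)
  have h := integral_mul_exp_neg_sq_norm_of_homogeneous volume (fun x ↦ g (inner ℝ v x))
    fun c hc x ↦ by rw [real_inner_smul_right, hg c hc]
  rw [integral_inner_mul_exp_neg_sq_norm_of_homogeneous g hg, finrank_euclideanSpace] at h
  field_simp
  linarith

lemma integral_mul_exp_neg_sq : ∫ t : ℝ, t * exp (-t ^ 2) = 0 := by
  have h := integral_neg_eq_self (fun t : ℝ ↦ t * exp (-t ^ 2)) volume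
  simp only [neg_sq, neg_mul, integral_neg] at h
  linarith

lemma integral_abs_mul_exp_neg_sq : ∫ t : ℝ, |t| * exp (-t ^ 2) = 1 := by
  have h := integral_Ioi_pow_mul_exp_neg_sq 1
  rw [show ((1 : ℕ) + 1 : ℝ) / 2 = 1 by norm_num, Gamma_one] at h
  simp only [pow_one] at h
  have := integral_comp_abs (f := fun t ↦ t * exp (-t ^ 2))
  simp only [sq_abs] at this
  rw [this, h]
  norm_num

theorem integral_toSphere_inner [Nonempty ι] (v : EuclideanSpace ℝ ι) :
    ∫ z : sphere (0 : EuclideanSpace ℝ ι) 1, inner ℝ v (z : EuclideanSpace ℝ ι) ∂volume.toSphere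
      = 0 := by
  simpa [integral_mul_exp_neg_sq] using
    integral_toSphere_inner_of_homogeneous id (fun _ _ _ ↦ rfl) v

theorem integral_toSphere_abs_inner [Nonempty ι] (v : EuclideanSpace ℝ ι) :
    ∫ z : sphere (0 : EuclideanSpace ℝ ι) 1, |inner ℝ v (z : EuclideanSpace ℝ ι)| ∂volume.toSphere
      = 2 * ‖v‖ * √π ^ (Fintype.card ι - 1) / Gamma ((Fintype.card ι + 1) / 2) := by
  simpa [integral_abs_mul_exp_neg_sq] using
    integral_toSphere_inner_of_homogeneous (|·|)
      (fun c hc t ↦ by rw [abs_mul, abs_of_nonneg hc]) v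

theorem integral_toSphere_min_inner [Nonempty ι] (x y : EuclideanSpace ℝ ι) :
    ∫ z : sphere (0 : EuclideanSpace ℝ ι) 1,
        min (inner ℝ x (z : EuclideanSpace ℝ ι)) (inner ℝ y (z : EuclideanSpace ℝ ι))
          ∂volume.toSphere
      = -(‖x - y‖ * √π ^ (Fintype.card ι - 1) / Gamma ((Fintype.card ι + 1) / 2)) := by
  have hint : ∀ f : sphere (0 : EuclideanSpace ℝ ι) 1 → ℝ, Continuous f →
      Integrable f volume.toSphere :=
    fun f hf ↦ hf.integrable_of_hasCompactSupport (.of_compactSpace f)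
  have hmin : ∀ z : sphere (0 : EuclideanSpace ℝ ι) 1,
      min (inner ℝ x (z : EuclideanSpace ℝ ι)) (inner ℝ y z) =
        (inner ℝ x (z : EuclideanSpace ℝ ι) + inner ℝ y (z : EuclideanSpace ℝ ι)
          - |inner ℝ (y - x) (z : EuclideanSpace ℝ ι)|) / 2 := by
    intro z
    rw [inner_sub_left]
    rcases le_total (inner ℝ x (z : EuclideanSpace ℝ ι)) (inner ℝ y z) with h | h
    · rw [min_eq_left h, abs_of_nonneg (sub_nonneg.2 h)]; ring
    · rw [min_eq_right h, abs_of_nonpos (sub_nonpos.2 h)]; ring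
  simp_rw [hmin]
  rw [integral_div, integral_sub, integral_add, integral_toSphere_inner, integral_toSphere_inner,
    integral_toSphere_abs_inner, norm_sub_rev]
  · ring
  all_goals exact hint _ (by fun_prop)

end Euclidean

lemma volume_toSphere_real_univ_fin_three :
    (volume : Measure (EuclideanSpace ℝ (Fin 3))).toSphere.real univ = 4 * π := by
  have hΓ : Gamma (3 / 2 + 1) = 3 / 4 * √π := by
    rw [Gamma_add_one (by norm_num), show (3 / 2 : ℝ) = 1 / 2 + 1 by norm_num,
      Gamma_add_one (by norm_num), Gamma_one_half_eq]
    ring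
  have hπ : √π ^ 3 = π * √π := by rw [pow_succ, sq_sqrt pi_pos.le]
  rw [Measure.toSphere_real_apply_univ, finrank_euclideanSpace, measureReal_def,
    EuclideanSpace.volume_ball, Fintype.card_fin, ENNReal.toReal_mul, ENNReal.toReal_ofReal
      (by positivity)]
  simp only [ENNReal.ofReal_one, one_pow, ENNReal.toReal_one, one_mul, Nat.cast_ofNat, hΓ, hπ]
  field_simp

lemma norm_sub_eq_two_mul_sin_arccos_inner_div_two {E : Type*} [NormedAddCommGroup E]
    [InnerProductSpace ℝ E] {x y : E} (hx : ‖x‖ = 1) (hy : ‖y‖ = 1) :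
    ‖x - y‖ = 2 * sin (arccos (inner ℝ x y) / 2) := by
  have hxy : |inner ℝ x y| ≤ 1 := by simpa [hx, hy] using abs_real_inner_le_norm x y
  have hθ := arccos_le_pi (inner ℝ x y)
  have hsin : 0 ≤ sin (arccos (inner ℝ x y) / 2) :=
    sin_nonneg_of_nonneg_of_le_pi (by linarith [arccos_nonneg (inner ℝ x y)]) (by linarith [pi_pos])
  refine (sq_eq_sq₀ (norm_nonneg _) (by positivity)).1 ?_
  rw [norm_sub_sq_real, hx, hy, mul_pow, sin_sq_eq_half_sub, two_mul (_ / 2), add_halves,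
    cos_arccos (abs_le.1 hxy).1 (abs_le.1 hxy).2]
  ring

lemma arccos_le_iff_cos_le {a r : ℝ} (ha : -1 ≤ a) (ha' : a ≤ 1) (hr : r ∈ Icc 0 π) :
    arccos a ≤ r ↔ cos r ≤ a := by
  conv_lhs => rw [← arccos_cos hr.1 hr.2]
  exact strictAntiOn_arccos.le_iff_ge ⟨ha, ha'⟩ ⟨neg_one_le_cos r, cos_le_one r⟩

lemma half_volume_restrict_Icc_neg_one_one_Iic {t : ℝ} (ht : t ∈ Icc (-1) 1) :
    ((2 : ℝ≥0∞)⁻¹ • volume.restrict (Icc (-1 : ℝ) 1)) (Iic t) = ENNReal.ofReal ((t + 1) / 2) := by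
  have hcap : Iic t ∩ Icc (-1) 1 = Icc (-1) t := by
    ext s
    simp only [mem_inter_iff, mem_Iic, mem_Icc]
    constructor
    · exact fun h ↦ ⟨h.2.1, h.1⟩
    · exact fun h ↦ ⟨h.2, h.1, h.2.trans ht.2⟩
  rw [Measure.smul_apply, Measure.restrict_apply measurableSet_Iic, hcap, Real.volume_Icc,
    smul_eq_mul, div_eq_inv_mul, ENNReal.ofReal_mul (by norm_num), sub_neg_eq_add, ENNReal.ofReal_inv_of_pos two_pos,
    ENNReal.ofReal_ofNat]

lemma ProbabilityTheory.IndepFun.measure_preimage_prodMk {Ω α β : Type*} [MeasurableSpace Ω]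
    [MeasurableSpace α] [MeasurableSpace β] {P : Measure Ω} [IsFiniteMeasure P] {X : Ω → α}
    {Y : Ω → β}
    (h : IndepFun X Y P) (hX : Measurable X) (hY : Measurable Y) {S : Set (α × β)}
    (hS : MeasurableSet S) :
    P ((fun ω ↦ (X ω, Y ω)) ⁻¹' S) = ∫⁻ a, P.map Y (Prod.mk a ⁻¹' S) ∂P.map X := by
  rw [← Measure.map_apply (hX.prodMk hY) hS,
    (indepFun_iff_map_prod_eq_prod_map_map hX.aemeasurable hY.aemeasurable).1 h,
    Measure.prod_apply hS]

lemma measure_le_comp_of_indepFun_uniform {Ω α : Type*} [MeasurableSpace Ω] [MeasurableSpace α]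
    {P : Measure Ω} [IsFiniteMeasure P] {X : Ω → α} {C : Ω → ℝ} (hX : Measurable X)
    (hC : Measurable C) (hindep : IndepFun X C P)
    (hCunif : P.map C = (2 : ℝ≥0∞)⁻¹ • volume.restrict (Icc (-1 : ℝ) 1)) {m : α → ℝ}
    (hm : Measurable m) (hm_mem : ∀ a, m a ∈ Icc (-1) 1) :
    P {ω | C ω ≤ m (X ω)} = ∫⁻ a, ENNReal.ofReal ((m a + 1) / 2) ∂P.map X := by
  have hS : MeasurableSet {p : α × ℝ | p.2 ≤ m p.1} :=
    measurableSet_le measurable_snd (hm.comp measurable_fst)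
  rw [← preimage_ofPred_eq (p := fun p : α × ℝ ↦ p.2 ≤ m p.1) (f := fun ω ↦ (X ω, C ω)),
    hindep.measure_preimage_prodMk hX hC hS, hCunif]
  exact lintegral_congr fun a ↦ half_volume_restrict_Icc_neg_one_one_Iic (hm_mem a)

theorem toReal_measure_mem_randomCap_pair {E : Type*} [NormedAddCommGroup E]
    [InnerProductSpace ℝ E] [FiniteDimensional ℝ E] [MeasurableSpace E] [BorelSpace E]
    [Nontrivial E] (μ : Measure E) [μ.IsAddHaarMeasure] {Ω : Type*} [MeasurableSpace Ω]
    (P : Measure Ω) [IsFiniteMeasure P] (X : Ω → sphere (0 : E) 1) (hX : Measurable X)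
    (R : Ω → ℝ) (hR : Measurable R) (hRrange : ∀ ω, R ω ∈ Icc 0 π)
    (hXunif : P.map X = (μ.toSphere univ)⁻¹ • μ.toSphere)
    (hRunif : P.map (fun ω ↦ cos (R ω)) = (2 : ℝ≥0∞)⁻¹ • volume.restrict (Icc (-1 : ℝ) 1))
    (hindep : IndepFun X R P) {x y : E} (hx : ‖x‖ = 1) (hy : ‖y‖ = 1) :
    (P {ω | arccos (inner ℝ x (X ω : E)) ≤ R ω ∧ arccos (inner ℝ y (X ω : E)) ≤ R ω}).toReal =
      1 / 2 + (∫ z, min (inner ℝ x (z : E)) (inner ℝ y (z : E)) ∂μ.toSphere) /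
        (2 * μ.toSphere.real univ) := by
  set m : sphere (0 : E) 1 → ℝ := fun z ↦ min (inner ℝ x (z : E)) (inner ℝ y (z : E))
  have hunit : ∀ {v : E}, ‖v‖ = 1 → ∀ z : sphere (0 : E) 1, inner ℝ v (z : E) ∈ Icc (-1) 1 := by
    intro v hv z
    exact abs_le.1 (by simpa [hv] using abs_real_inner_le_norm v (z : E))
  have hm : ∀ z, m z ∈ Icc (-1) 1 := fun z ↦
    ⟨le_min (hunit hx z).1 (hunit hy z).1, (min_le_left _ _).trans (hunit hx z).2⟩
  have hm_cont : Continuous m := by fun_prop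
  have hevent : {ω | arccos (inner ℝ x (X ω : E)) ≤ R ω ∧ arccos (inner ℝ y (X ω : E)) ≤ R ω} =
      {ω | cos (R ω) ≤ m (X ω)} := by
    ext ω
    simp only [mem_ofPred_eq, m, le_min_iff]
    rw [arccos_le_iff_cos_le (hunit hx _).1 (hunit hx _).2 (hRrange ω),
      arccos_le_iff_cos_le (hunit hy _).1 (hunit hy _).2 (hRrange ω)]
  have : NeZero μ.toSphere := ⟨μ.toSphere_ne_zero⟩
  have hσ : μ.toSphere.real univ ≠ 0 := measureReal_univ_pos.ne'
  have hint : Integrable m μ.toSphere :=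
    hm_cont.integrable_of_hasCompactSupport (.of_compactSpace _)
  have hcdf_nonneg : ∀ z, 0 ≤ (m z + 1) / 2 := fun z ↦
    div_nonneg (neg_le_iff_add_nonneg.1 (hm z).1) zero_le_two
  rw [hevent, measure_le_comp_of_indepFun_uniform (C := fun ω ↦ cos (R ω)) hX hR.cos
      (hindep.comp measurable_id measurable_cos) hRunif hm_cont.measurable hm, hXunif,
    lintegral_smul_measure, ← ofReal_integral_eq_lintegral_ofReal (f := fun z ↦ (m z + 1) / 2)
      ((hint.add (integrable_const 1)).div_const 2) (.of_forall hcdf_nonneg),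
    smul_eq_mul, ENNReal.toReal_mul, ENNReal.toReal_inv,
    ENNReal.toReal_ofReal (integral_nonneg hcdf_nonneg), ← measureReal_def, integral_div,
    integral_add hint (integrable_const 1), integral_const, smul_eq_mul, mul_one]
  field_simp
  ring

/-- Let `X` be uniform on `S²`, `R` independent of `X` with values in `[0, π]` and `cos R`
uniform on `[-1,1]`, and `B = {z ∈ S² : d_{S²}(z,X) ≤ R}` the random spherical cap.  Then for
all `x, y ∈ S²`: `P(x ∈ B, y ∈ B) = 1/2 - (1/4)·sin(d_{S²}(x,y)/2)`, where
`d_{S²}(x,y) = arccos⟨x,y⟩`. -/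
theorem stmt18 {Ω : Type*} [MeasurableSpace Ω] (P : Measure Ω) [IsProbabilityMeasure P]
    (X : Ω → Metric.sphere (0 : EuclideanSpace ℝ (Fin 3)) 1) (hX : Measurable X)
    (R : Ω → ℝ) (hR : Measurable R) (hRrange : ∀ ω, R ω ∈ Set.Icc 0 Real.pi)
    (hXunif : Measure.map X P =
      (((volume : Measure (EuclideanSpace ℝ (Fin 3))).toSphere Set.univ)⁻¹ •
        (volume : Measure (EuclideanSpace ℝ (Fin 3))).toSphere))
    (hRunif : Measure.map (fun ω => Real.cos (R ω)) P =
      (2 : ENNReal)⁻¹ • volume.restrict (Set.Icc (-1 : ℝ) 1))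
    (hindep : IndepFun X R P)
    (x y : EuclideanSpace ℝ (Fin 3)) (hx : ‖x‖ = 1) (hy : ‖y‖ = 1) :
    (P {ω | Real.arccos (inner ℝ x ((X ω : EuclideanSpace ℝ (Fin 3))) : ℝ) ≤ R ω ∧
        Real.arccos (inner ℝ y ((X ω : EuclideanSpace ℝ (Fin 3))) : ℝ) ≤ R ω}).toReal =
      1 / 2 - (1 / 4) * Real.sin (Real.arccos ((inner ℝ x y : ℝ)) / 2) := by
  rw [toReal_measure_mem_randomCap_pair volume P X hX R hR hRrange hXunif hRunif hindep hx hy,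
    integral_toSphere_min_inner, volume_toSphere_real_univ_fin_three,
    norm_sub_eq_two_mul_sin_arccos_inner_div_two hx hy, Fintype.card_fin]
  norm_num [Gamma_two, sq_sqrt pi_pos.le]
  field_simp
  ring
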